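/- Let C be a non-degenerate [n,k,d]_q MWS code with q·k even, and let h be the non-negative integer with 2n = q·q_k + 2h. Then 2d ≥ (q − 2)·q_k + 2 + 2h·(1 − q_{k−1}) and 2d ≤ (q − 2)·q_k + 2 + 2h − 2·⌈h·q_{k−1}/q_k⌉. -/
import Mathlib


open scoped Classical
open Finset

/-- `qk q k = (q^k - 1)/(q - 1)`, the number of nonzero weights an MWS code of dimension `k`
over a field with `q` elements has. -/
def qk (q k : ℕ) : ℕ := (q ^ k - 1) / (q - 1)

/-- The set of nonzero Hamming weights of a linear code `C ⊆ F^n`. -/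
noncomputable def weightSet {F : Type*} [Field F] [Fintype F] {n : ℕ}
    (C : Submodule F (Fin n → F)) : Finset ℕ :=
  Finset.image (fun c => hammingNorm c)
    (Finset.univ.filter fun c : Fin n → F => c ∈ C ∧ c ≠ 0)

/-- A code is non-degenerate if no coordinate is identically zero. -/
def Nondeg {F : Type*} [Field F] {n : ℕ} (C : Submodule F (Fin n → F)) : Prop :=
  ∀ i : Fin n, ∃ c ∈ C, c i ≠ 0

/-- Maximum weight spectrum code of dimension `k`. -/
def IsMWS {F : Type*} [Field F] [Fintype F] {n : ℕ}
    (C : Submodule F (Fin n → F)) (k : ℕ) : Prop :=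
  (weightSet C).card = qk (Fintype.card F) k

/-- The spread of an MWS code. -/
noncomputable def spread {F : Type*} [Field F] [Fintype F] {n : ℕ}
    (C : Submodule F (Fin n → F)) (k : ℕ) : ℤ :=
  (n : ℤ) * qk (Fintype.card F) k
    - ((qk (Fintype.card F) k * (qk (Fintype.card F) k - 1)) / 2 : ℕ)
    - ∑ w ∈ weightSet C, (w : ℤ)

/-- A compact MWS code: the weight set is an interval of `q_k` consecutive integers starting
at the minimum distance. -/
def IsCompactMWS {F : Type*} [Field F] [Fintype F] {n : ℕ}
    (C : Submodule F (Fin n → F)) (k : ℕ) : Prop :=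
  IsMWS C k ∧ ∃ d, d ∈ weightSet C ∧
    weightSet C = Finset.Icc d (d + qk (Fintype.card F) k - 1)

/-- A strictly compact MWS code: a compact MWS code whose length is itself a weight. -/
def IsStrictlyCompactMWS {F : Type*} [Field F] [Fintype F] {n : ℕ}
    (C : Submodule F (Fin n → F)) (k : ℕ) : Prop :=
  IsCompactMWS C k ∧ n ∈ weightSet C


lemma sum_range_card_le (T : Finset ℕ) : ∑ i ∈ Finset.range T.card, i ≤ ∑ x ∈ T, x := by
  induction T using Finset.strongInduction with
  | _ T ih =>
    rcases T.eq_empty_or_nonempty with rfl | hT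
    · simp
    · have hM := T.max'_mem hT
      have hub : T.card - 1 ≤ T.max' hT := by
        have hsub : T ⊆ Finset.range (T.max' hT + 1) := fun x hx =>
          Finset.mem_range.mpr (Nat.lt_succ_of_le (Finset.le_max' T x hx))
        have := Finset.card_le_card hsub
        simp only [Finset.card_range] at this
        omega
      have h2 := ih (T.erase (T.max' hT)) (Finset.erase_ssubset hM)
      rw [Finset.card_erase_of_mem hM] at h2
      have h3 : ∑ x ∈ T, x = T.max' hT + ∑ x ∈ T.erase (T.max' hT), x :=
        (Finset.add_sum_erase _ _ hM).symm
      have hpos : 1 ≤ T.card := Finset.card_pos.mpr hT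
      have h4 : ∑ i ∈ Finset.range T.card, i
          = ∑ i ∈ Finset.range (T.card - 1), i + (T.card - 1) := by
        conv_lhs => rw [show T.card = (T.card - 1) + 1 by omega]
        rw [Finset.sum_range_succ]
      omega

lemma geom_mul {q : ℕ} (hq : 2 ≤ q) (k : ℕ) :
    (q - 1) * ∑ i ∈ Finset.range k, q ^ i = q ^ k - 1 := by
  induction k with
  | zero => simp
  | succ m ihm =>
    rw [Finset.sum_range_succ, Nat.mul_add, ihm]
    have h1 : 1 ≤ q ^ m := Nat.one_le_pow _ _ (by omega)
    have h3 : (q - 1) * q ^ m = q ^ (m + 1) - q ^ m := by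
      rw [pow_succ, Nat.mul_comm (q - 1), Nat.mul_sub, Nat.mul_one]
    have h2b : q ^ m ≤ q ^ (m + 1) := Nat.pow_le_pow_right (by omega) (by omega)
    omega

lemma qk_eq_geom {q : ℕ} (hq : 2 ≤ q) (k : ℕ) :
    qk q k = ∑ i ∈ Finset.range k, q ^ i := by
  rw [qk, ← geom_mul hq k, Nat.mul_div_cancel_left _ (by omega : 0 < q - 1)]

lemma qk_mul (hq : 2 ≤ q) (k : ℕ) : (q - 1) * qk q k = q ^ k - 1 := by
  rw [qk_eq_geom hq, geom_mul hq]

lemma qk_succ {q : ℕ} (hq : 2 ≤ q) {k : ℕ} (hk : 1 ≤ k) :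
    qk q k = 1 + q * qk q (k - 1) := by
  obtain ⟨m, rfl⟩ : ∃ m, k = m + 1 := ⟨k - 1, by omega⟩
  rw [qk_eq_geom hq, qk_eq_geom hq, Nat.add_sub_cancel, Finset.sum_range_succ']
  simp only [pow_zero, pow_succ']
  rw [← Finset.mul_sum]
  omega

lemma qk_succ' {q : ℕ} (hq : 2 ≤ q) {k : ℕ} (hk : 1 ≤ k) :
    qk q k = qk q (k - 1) + q ^ (k - 1) := by
  obtain ⟨m, rfl⟩ : ∃ m, k = m + 1 := ⟨k - 1, by omega⟩
  rw [qk_eq_geom hq, qk_eq_geom hq, Nat.add_sub_cancel, Finset.sum_range_succ]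

lemma qk_even {q : ℕ} (hq : 2 ≤ q) (hqodd : Odd q) {k : ℕ} (hk : Even k) :
    Even (qk q k) := by
  obtain ⟨t, rfl⟩ := hk
  rw [qk_eq_geom hq]
  rw [show t + t = 2 * t by ring]
  induction t with
  | zero => simp
  | succ s ihs =>
    rw [show 2 * (s + 1) = (2 * s + 1) + 1 by ring, Finset.sum_range_succ,
      Finset.sum_range_succ]
    have hqe : Even (q ^ (2 * s) + q ^ (2 * s + 1)) := by
      rw [pow_succ, show q ^ (2*s) + q ^ (2*s) * q = q ^ (2*s) * (1 + q) by ring]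
      exact (by simpa [add_comm] using hqodd.add_one : Even (1 + q)).mul_left _
    rw [add_assoc]
    exact ihs.add hqe

set_option maxHeartbeats 1000000 in
/-- Let $C$ be a non-degenerate $[n,k,d]_q$ MWS code with $q·k$ even, and let
$h ≥ 0$ be such that $2n = q·q_k + 2h$. Then
$2d ≥ (q-2)q_k + 2 + 2h(1 - q_{k-1})$ and $2d ≤ (q-2)q_k + 2 + 2h - 2⌈h·q_{k-1}/q_k⌉$. -/
theorem stmt_9 {F : Type*} [Field F] [Fintype F] {n k d : ℕ}
    (heven : Even (Fintype.card F * k))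
    (C : Submodule F (Fin n → F))
    (hdim : Module.finrank F C = k)
    (hnd : Nondeg C)
    (hMWS : IsMWS C k)
    (hd : d ∈ weightSet C) (hdmin : ∀ w ∈ weightSet C, d ≤ w)
    (h : ℕ) (hn : 2 * n = Fintype.card F * qk (Fintype.card F) k + 2 * h) :
    ((Fintype.card F : ℤ) - 2) * qk (Fintype.card F) k + 2
        + 2 * h * (1 - qk (Fintype.card F) (k - 1)) ≤ 2 * (d : ℤ) ∧
    2 * (d : ℤ) ≤ ((Fintype.card F : ℤ) - 2) * qk (Fintype.card F) k + 2 + 2 * h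
      - 2 * ⌈((h * qk (Fintype.card F) (k - 1) : ℕ) : ℚ) / (qk (Fintype.card F) k : ℚ)⌉ := by
  classical
  set q := Fintype.card F with hqdef
  have hq2 : 2 ≤ q := Fintype.one_lt_card
  -- k ≥ 1
  have hk1 : 1 ≤ k := by
    by_contra hk
    have hk0 : k = 0 := by omega
    have hcard0 : (weightSet C).card = 0 := by
      rw [hMWS, hk0]; simp [qk]
    rw [Finset.card_eq_zero] at hcard0
    rw [hcard0] at hd; exact absurd hd (Finset.notMem_empty d)
  set N := qk q k with hNdef
  set Q1 := qk q (k - 1) with hQ1def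
  have hNQ1 : N = 1 + q * Q1 := qk_succ hq2 hk1
  have hNQ1' : N = Q1 + q ^ (k - 1) := qk_succ' hq2 hk1
  have hqN : (q - 1) * N = q ^ k - 1 := qk_mul hq2 k
  have hNpos : 1 ≤ N := by omega
  -- cardinality of C
  have hcardC : Fintype.card C = q ^ k := by
    rw [Module.card_eq_pow_finrank (K := F), hdim]
  -- kernel counts
  have hker : ∀ i : Fin n, Fintype.card {c : C // (c : Fin n → F) i = 0} = q ^ (k - 1) := by
    intro i
    obtain ⟨c0, hc0C, hc0i⟩ := hnd i
    set φ : C →ₗ[F] F := (LinearMap.proj i).comp C.subtype with hφdef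
    have φdef : ∀ z : C, φ z = (z : Fin n → F) i := fun z => rfl
    have hsurj : Function.Surjective φ := by
      intro y
      refine ⟨(y * (c0 i)⁻¹) • ⟨c0, hc0C⟩, ?_⟩
      rw [map_smul, φdef, smul_eq_mul]
      field_simp
    have hrk := LinearMap.finrank_range_add_finrank_ker φ
    rw [LinearMap.range_eq_top.mpr hsurj, finrank_top, Module.finrank_self, hdim] at hrk
    have hkerdim : Module.finrank F (LinearMap.ker φ) = k - 1 := by omega
    have hcardker : Fintype.card (LinearMap.ker φ) = q ^ (k - 1) := by
      rw [Module.card_eq_pow_finrank (K := F), hkerdim]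
    rw [← hcardker]
    exact Fintype.card_congr (Equiv.subtypeEquivRight (fun c => by
      rw [LinearMap.mem_ker, φdef]))
  have hcnt : ∀ i : Fin n,
      Fintype.card {c : C // (c : Fin n → F) i ≠ 0} = q ^ k - q ^ (k - 1) := by
    intro i
    have h1 := Fintype.card_subtype_compl (fun c : C => (c : Fin n → F) i = 0)
    rw [hcardC, hker i] at h1
    exact h1
  -- total weight over the code
  have hsumC : ∑ c : C, hammingNorm (c : Fin n → F) = n * (q ^ k - q ^ (k - 1)) :=
    calc ∑ c : C, hammingNorm (c : Fin n → F)
        = ∑ c : C, ∑ i : Fin n, if (c : Fin n → F) i ≠ 0 then 1 else 0 := by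
          refine Finset.sum_congr rfl fun c _ => ?_
          rw [hammingNorm, Finset.card_filter]
      _ = ∑ i : Fin n, ∑ c : C, if (c : Fin n → F) i ≠ 0 then 1 else 0 := Finset.sum_comm
      _ = ∑ _i : Fin n, (q ^ k - q ^ (k - 1)) := by
          refine Finset.sum_congr rfl fun i _ => ?_
          rw [← Finset.card_filter, ← Fintype.card_subtype, hcnt i]
      _ = n * (q ^ k - q ^ (k - 1)) := by simp [mul_comm]
  -- nonzero codewords
  set NZ : Finset (Fin n → F) := Finset.univ.filter (fun c => c ∈ C ∧ c ≠ 0) with hNZdef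
  have hws : weightSet C = NZ.image (fun c => hammingNorm c) := by
    rw [weightSet, hNZdef]
  have hNZcard : NZ.card = q ^ k - 1 := by
    rw [hNZdef, ← Fintype.card_subtype]
    have e : {x : Fin n → F // x ∈ C ∧ x ≠ 0} ≃ {c : C // c ≠ 0} :=
      { toFun := fun x => ⟨⟨x.1, x.2.1⟩, fun hc => x.2.2 (congrArg Subtype.val hc)⟩
        invFun := fun c => ⟨c.1.1, c.1.2, fun hc => c.2 (Subtype.ext hc)⟩
        left_inv := fun x => rfl
        right_inv := fun c => rfl }
    rw [Fintype.card_congr e]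
    have h1 := Fintype.card_subtype_compl (fun c : C => c = 0)
    rw [Fintype.card_subtype_eq (0 : C), hcardC] at h1
    exact h1
  have hmapsto : ∀ c ∈ NZ, hammingNorm c ∈ weightSet C := fun c hc =>
    hws ▸ Finset.mem_image_of_mem _ hc
  -- fibers have size at least q - 1
  have hfiber_ge : ∀ w ∈ weightSet C,
      q - 1 ≤ (NZ.filter fun c => hammingNorm c = w).card := by
    intro w hw
    rw [hws] at hw
    obtain ⟨c0, hc0, hc0w⟩ := Finset.mem_image.mp hw
    rw [hNZdef, Finset.mem_filter] at hc0
    obtain ⟨-, hc0C, hc0ne⟩ := hc0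
    have hmaps : ∀ a ∈ (Finset.univ.filter fun a : F => a ≠ 0),
        (a • c0) ∈ NZ.filter (fun c => hammingNorm c = w) := by
      intro a ha
      simp only [Finset.mem_filter, Finset.mem_univ, true_and] at ha ⊢
      refine ⟨?_, ?_⟩
      · rw [hNZdef]
        simp only [Finset.mem_filter, Finset.mem_univ, true_and]
        exact ⟨C.smul_mem a hc0C, smul_ne_zero ha hc0ne⟩
      · rw [← hc0w, hammingNorm, hammingNorm]
        congr 1
        ext i
        simp [Pi.smul_apply, smul_eq_mul, ha]
    have hinj : Set.InjOn (fun a : F => a • c0)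
        ↑(Finset.univ.filter fun a : F => a ≠ 0) := by
      intro a _ b _ hab
      simp only at hab
      by_contra hne
      have hc : (a - b) • c0 = 0 := by rw [sub_smul, hab, sub_self]
      rcases smul_eq_zero.mp hc with hz | hz
      · exact hne (sub_eq_zero.mp hz)
      · exact hc0ne hz
    have hle := Finset.card_le_card_of_injOn _ hmaps hinj
    have hcardF : (Finset.univ.filter fun a : F => a ≠ 0).card = q - 1 := by
      rw [← Fintype.card_subtype]
      have h1 := Fintype.card_subtype_compl (fun a : F => a = 0)
      rw [Fintype.card_subtype_eq (0 : F)] at h1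
      exact h1
    omega
  have hfibsum : ∑ w ∈ weightSet C, (NZ.filter fun c => hammingNorm c = w).card
      = q ^ k - 1 := by
    rw [← Finset.card_eq_sum_card_fiberwise hmapsto, hNZcard]
  have hcardS : (weightSet C).card = N := hMWS
  have hconst : ∑ _w ∈ weightSet C, (q - 1) = q ^ k - 1 := by
    rw [Finset.sum_const, hcardS, smul_eq_mul, mul_comm, hqN]
  have hfib_eq : ∀ w ∈ weightSet C,
      (NZ.filter fun c => hammingNorm c = w).card = q - 1 := by
    intro w hw
    exact ((Finset.sum_eq_sum_iff_of_le hfiber_ge).mp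
      (hconst.trans hfibsum.symm) w hw).symm
  have hsum_fib : ∑ c ∈ NZ, hammingNorm c = ∑ w ∈ weightSet C, (q - 1) * w := by
    rw [← Finset.sum_fiberwise_of_maps_to hmapsto (fun c => hammingNorm c)]
    refine Finset.sum_congr rfl fun w hw => ?_
    calc ∑ c ∈ NZ.filter (fun c => hammingNorm c = w), hammingNorm c
        = ∑ _c ∈ NZ.filter (fun c => hammingNorm c = w), w :=
          Finset.sum_congr rfl (fun c hc => (Finset.mem_filter.mp hc).2)
      _ = (NZ.filter fun c => hammingNorm c = w).card * w := by
          rw [Finset.sum_const, smul_eq_mul]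
      _ = (q - 1) * w := by rw [hfib_eq w hw]
  have hNZsum : ∑ c ∈ NZ, hammingNorm c = ∑ c : C, hammingNorm (c : Fin n → F) := by
    have h0 : ∑ x ∈ (Finset.univ.filter fun x : Fin n → F => x ∈ C).filter
          (fun x => x ≠ 0), hammingNorm x
        = ∑ x ∈ Finset.univ.filter (fun x : Fin n → F => x ∈ C), hammingNorm x := by
      refine Finset.sum_filter_of_ne fun x _ hx => ?_
      intro hx0
      exact hx (by simp [hx0, hammingNorm])
    rw [Finset.filter_filter] at h0
    rw [hNZdef]
    rw [h0]
    exact Finset.sum_subtype _ (fun x => by simp) _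
  -- the key sum identity
  have hsum_eq : ∑ w ∈ weightSet C, w = n * q ^ (k - 1) := by
    have hfac : q ^ k - q ^ (k - 1) = (q - 1) * q ^ (k - 1) := by
      have hp : q ^ k = q * q ^ (k - 1) := by
        rw [← pow_succ']
        congr 1
        omega
      rw [hp, Nat.sub_mul, one_mul]
    have hmul : (q - 1) * (∑ w ∈ weightSet C, w) = (q - 1) * (n * q ^ (k - 1)) := by
      rw [Finset.mul_sum, ← hsum_fib, hNZsum, hsumC, hfac]
      ring
    exact Nat.eq_of_mul_eq_mul_left (by omega) hmul
  -- weights are at most n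
  have hwle : ∀ w ∈ weightSet C, w ≤ n := by
    intro w hw
    rw [hws] at hw
    obtain ⟨c, -, rfl⟩ := Finset.mem_image.mp hw
    rw [hammingNorm]
    calc ({i | c i ≠ 0} : Finset (Fin n)).card ≤ (Finset.univ : Finset (Fin n)).card :=
          Finset.card_le_card (Finset.subset_univ _)
      _ = n := by simp
  -- lower bound on the sum
  have hlow : 2 * (N * d) + N * (N - 1) ≤ 2 * ∑ w ∈ weightSet C, w := by
    have hinj : Set.InjOn (fun w => w - d) ↑(weightSet C) := by
      intro a ha b hb hab
      have h1 := hdmin a (Finset.mem_coe.mp ha)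
      have h2 := hdmin b (Finset.mem_coe.mp hb)
      simp only at hab
      omega
    have hTcard : ((weightSet C).image (fun w => w - d)).card = N := by
      rw [Finset.card_image_of_injOn hinj, hcardS]
    have h2 := sum_range_card_le ((weightSet C).image (fun w => w - d))
    rw [hTcard] at h2
    rw [Finset.sum_image (fun a ha b hb hab => hinj (Finset.mem_coe.mpr ha)
      (Finset.mem_coe.mpr hb) hab)] at h2
    have h4 : ∑ w ∈ weightSet C, (w - d) + N * d = ∑ w ∈ weightSet C, w := by
      have h5 : ∑ w ∈ weightSet C, ((w - d) + d) = ∑ w ∈ weightSet C, w :=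
        Finset.sum_congr rfl fun w hw => by have := hdmin w hw; omega
      rw [Finset.sum_add_distrib, Finset.sum_const, smul_eq_mul, hcardS] at h5
      exact h5
    have h5 := Finset.sum_range_id_mul_two N
    omega
  -- upper bound on the sum
  have hhigh : 2 * (∑ w ∈ weightSet C, w) + (N - 1) * (N - 2)
      ≤ 2 * d + 2 * ((N - 1) * n) := by
    set S' := (weightSet C).erase d with hS'def
    have hS'card : S'.card = N - 1 := by
      rw [hS'def, Finset.card_erase_of_mem hd, hcardS]
    have hS'sub : ∀ w ∈ S', w ∈ weightSet C := fun w hw => Finset.mem_of_mem_erase hw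
    have hinj : Set.InjOn (fun w => n - w) ↑S' := by
      intro a ha b hb hab
      have h1 := hwle a (hS'sub a (Finset.mem_coe.mp ha))
      have h2 := hwle b (hS'sub b (Finset.mem_coe.mp hb))
      simp only at hab
      omega
    have hTcard : (S'.image (fun w => n - w)).card = N - 1 := by
      rw [Finset.card_image_of_injOn hinj, hS'card]
    have h2 := sum_range_card_le (S'.image (fun w => n - w))
    rw [hTcard] at h2
    rw [Finset.sum_image (fun a ha b hb hab => hinj (Finset.mem_coe.mpr ha)
      (Finset.mem_coe.mpr hb) hab)] at h2
    have h4 : ∑ w ∈ S', (n - w) + ∑ w ∈ S', w = (N - 1) * n := by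
      have h5 : ∑ w ∈ S', ((n - w) + w) = ∑ _w ∈ S', n :=
        Finset.sum_congr rfl fun w hw => by have := hwle w (hS'sub w hw); omega
      rw [Finset.sum_add_distrib, Finset.sum_const, smul_eq_mul, hS'card] at h5
      exact h5
    have hsplit : ∑ w ∈ weightSet C, w = d + ∑ w ∈ S', w :=
      (Finset.add_sum_erase _ _ hd).symm
    have h6 : (∑ i ∈ Finset.range (N - 1), i) * 2 = (N - 1) * (N - 2) := by
      rw [Finset.sum_range_id_mul_two]
      congr 1
    omega
  -- move to the integers
  set Z := ∑ w ∈ weightSet C, w with hZdef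
  have zq : (2 : ℤ) ≤ (q : ℤ) := by exact_mod_cast hq2
  have zNQ1 : (N : ℤ) = 1 + (q : ℤ) * (Q1 : ℤ) := by exact_mod_cast hNQ1
  have zNQ1' : (N : ℤ) = (Q1 : ℤ) + (q : ℤ) ^ (k - 1) := by exact_mod_cast hNQ1'
  have zsum : (Z : ℤ) = (n : ℤ) * (q : ℤ) ^ (k - 1) := by exact_mod_cast hsum_eq
  have zn : 2 * (n : ℤ) = (q : ℤ) * (N : ℤ) + 2 * (h : ℤ) := by exact_mod_cast hn
  have zlow : 2 * ((N : ℤ) * (d : ℤ)) + (N : ℤ) * ((N : ℤ) - 1) ≤ 2 * (Z : ℤ) := by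
    have h1 : ((2 * (N * d) + N * (N - 1) : ℕ) : ℤ) ≤ ((2 * Z : ℕ) : ℤ) :=
      Int.ofNat_le.mpr hlow
    push_cast [Nat.cast_sub hNpos] at h1
    linarith
  have zhigh : 2 * (Z : ℤ) + ((N : ℤ) - 1) * ((N : ℤ) - 2)
      ≤ 2 * (d : ℤ) + 2 * (((N : ℤ) - 1) * (n : ℤ)) := by
    have h1 : ((2 * Z + (N - 1) * (N - 2) : ℕ) : ℤ)
        ≤ ((2 * d + 2 * ((N - 1) * n) : ℕ) : ℤ) := Int.ofNat_le.mpr hhigh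
    rcases Nat.lt_or_ge N 2 with hN2 | hN2
    · have hN1 : N = 1 := by omega
      rw [hN1] at h1 ⊢
      push_cast at h1 ⊢
      linarith
    · push_cast [Nat.cast_sub hNpos, Nat.cast_sub hN2] at h1
      linarith
  constructor
  · -- lower bound
    have E1 : 2 * (Z : ℤ) - 2 * ((N : ℤ) - 1) * (n : ℤ) + ((N : ℤ) - 1) * ((N : ℤ) - 2)
        = ((q : ℤ) - 2) * (N : ℤ) + 2 + 2 * (h : ℤ) * (1 - (Q1 : ℤ)) := by
      rw [zsum]
      have hp : (q : ℤ) ^ (k - 1) = (N : ℤ) - (Q1 : ℤ) := by linarith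
      rw [hp]
      linear_combination (1 - (Q1 : ℤ)) * zn + (N : ℤ) * zNQ1
    linarith [zhigh, E1]
  · -- upper bound
    have hNposZ : (0 : ℤ) < (N : ℤ) := by exact_mod_cast hNpos
    -- evenness
    have heven2 : ∃ t : ℤ, ((q : ℤ) - 2) * (N : ℤ) = 2 * t := by
      rcases Nat.even_or_odd q with hqe | hqo
      · obtain ⟨a, ha⟩ := hqe
        refine ⟨((a : ℤ) - 1) * (N : ℤ), ?_⟩
        have : (q : ℤ) = 2 * (a : ℤ) := by exact_mod_cast (by omega : q = 2 * a)
        rw [this]; ring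
      · have hkeven : Even k := by
          rcases Nat.even_or_odd k with hke | hko
          · exact hke
          · exact absurd heven (by simp [Nat.even_mul, Nat.not_even_iff_odd.mpr hqo,
              Nat.not_even_iff_odd.mpr hko])
        obtain ⟨b, hb⟩ := qk_even hq2 hqo hkeven
        refine ⟨((q : ℤ) - 2) * (b : ℤ), ?_⟩
        have : (N : ℤ) = 2 * (b : ℤ) := by exact_mod_cast (by omega : N = 2 * b)
        rw [this]; ring
    obtain ⟨t, ht⟩ := heven2
    obtain ⟨m, hm⟩ : ∃ m : ℤ,
        ((q : ℤ) - 2) * (N : ℤ) + 2 + 2 * (h : ℤ) - 2 * (d : ℤ) = 2 * m :=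
      ⟨t + 1 + (h : ℤ) - (d : ℤ), by linear_combination ht⟩
    have E2 : (((q : ℤ) - 2) * (N : ℤ) + 2 + 2 * (h : ℤ)) * (N : ℤ) - 2 * (Z : ℤ)
        + (N : ℤ) * ((N : ℤ) - 1) = 2 * (h : ℤ) * (Q1 : ℤ) := by
      rw [zsum]
      have hp : (q : ℤ) ^ (k - 1) = (N : ℤ) - (Q1 : ℤ) := by linarith
      rw [hp]
      linear_combination (-(N : ℤ) + (Q1 : ℤ)) * zn - (N : ℤ) * zNQ1
    have hm' : (((q : ℤ) - 2) * (N : ℤ) + 2 + 2 * (h : ℤ) - 2 * (d : ℤ)) * (N : ℤ)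
        = 2 * m * (N : ℤ) := by linear_combination (N : ℤ) * hm
    have hZ2 : 2 * ((h : ℤ) * (Q1 : ℤ)) ≤ 2 * (m * (N : ℤ)) := by linarith only [zlow, E2, hm']
    have hZ : (h : ℤ) * (Q1 : ℤ) ≤ m * (N : ℤ) := by linarith
    have hNQ : (0 : ℚ) < ((N : ℕ) : ℚ) := by
      have : 0 < N := by omega
      exact_mod_cast this
    have hx : ((h * Q1 : ℕ) : ℚ) / ((N : ℕ) : ℚ) ≤ (m : ℚ) := by
      rw [div_le_iff₀ hNQ]
      push_cast
      exact_mod_cast hZ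
    have hceil := Int.ceil_le.mpr hx
    linarith only [hceil, hm]
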